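/- If a set E ⊆ ℝ^d satisfies the k-dimensional (ℓ,γ)-geometric control condition (every k-dimensional cube of side length at least ℓ meets E in k-dimensional Hausdorff measure at least γℓ^k), then for every j with k ≤ j ≤ d, E satisfies the j-dimensional (ℓ,γ')-GCC for some γ' > 0. -/

import Mathlib

/-!
Pull `E` back along the affine isometry carrying the `j`-cube, write `j = m + k` and split
`ℝʲ = ℝᵐ × ℝᵏ` isometrically. Each slice `{t} × ℝᵏ` is a `k`-plane, so for `t ∈ [0,a]ᵐ` the
`k`-dimensional GCC bounds the `k`-volume of the slice of `[0,a]ʲ ∩ E` from below, and Fubini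
integrates these bounds over `[0,a]ᵐ`. On `ℝⁿ` the `n`-dimensional Hausdorff measure is a constant
multiple of Lebesgue measure, which converts between the two at the cost of a dimensional constant.
-/

open MeasureTheory
open scoped MeasureTheory

/-- `E ⊆ ℝ^d` satisfies the `k`-dimensional `(ℓ,γ)`-geometric control condition:
every `k`-dimensional cube of side length at least `ℓ` (the image under an affine
isometry of a standard cube in `ℝ^k`) meets `E` in `k`-dimensional Hausdorff
measure at least `γ ℓ^k`. -/
def SatisfiesGCC (d k : ℕ) (ℓ γ : ℝ) (E : Set (EuclideanSpace ℝ (Fin d))) : Prop :=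
  ∀ (φ : EuclideanSpace ℝ (Fin k) →ᵃⁱ[ℝ] EuclideanSpace ℝ (Fin d)) (a : ℝ), ℓ ≤ a →
    ENNReal.ofReal (γ * ℓ ^ k) ≤
      μH[(k : ℝ)] ((φ '' (WithLp.ofLp ⁻¹' Set.univ.pi fun _ : Fin k => Set.Icc (0 : ℝ) a)) ∩ E)

open Set
open scoped NNReal ENNReal

theorem MeasureTheory.Measure.measure_mul_le_prod_of_le_slice {α β : Type*} [MeasurableSpace α]
    [MeasurableSpace β] {μ : Measure α} {ν : Measure β} [SFinite ν] {A : Set α}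
    {S : Set (α × β)} {b : ℝ≥0∞} (h : ∀ t ∈ A, b ≤ ν (Prod.mk t ⁻¹' S)) :
    μ A * b ≤ μ.prod ν S := by
  set M := toMeasurable (μ.prod ν) S
  have hM : MeasurableSet M := measurableSet_toMeasurable _ _
  calc μ A * b = ∫⁻ _ in A, b ∂μ := by rw [setLIntegral_const, mul_comm]
    _ ≤ ∫⁻ t in A, ν (Prod.mk t ⁻¹' M) ∂μ :=
        setLIntegral_mono (measurable_measure_prodMk_left hM)
          fun t ht => (h t ht).trans (measure_mono (preimage_mono (subset_toMeasurable _ _)))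
    _ ≤ ∫⁻ t, ν (Prod.mk t ⁻¹' M) ∂μ := setLIntegral_le_lintegral _ _
    _ = μ.prod ν S := by rw [← Measure.prod_apply hM, measure_toMeasurable]

section

variable (U : Type*) {V : Type*} [NormedAddCommGroup U] [InnerProductSpace ℝ U]
  [NormedAddCommGroup V] [InnerProductSpace ℝ V]

noncomputable def LinearIsometry.withLpInr : V →ₗᵢ[ℝ] WithLp 2 (U × V) where
  toLinearMap := (WithLp.linearEquiv 2 ℝ (U × V)).symm.toLinearMap ∘ₗ LinearMap.inr ℝ U V
  norm_map' v := by simp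

@[simp]
theorem LinearIsometry.withLpInr_apply (v : V) : withLpInr U v = WithLp.toLp 2 (0, v) := rfl

end

namespace EuclideanSpace

def stdCube (n : ℕ) (a : ℝ) : Set (EuclideanSpace ℝ (Fin n)) :=
  WithLp.ofLp ⁻¹' univ.pi fun _ => Icc 0 a

theorem volume_stdCube (n : ℕ) (a : ℝ) : volume (stdCube n a) = ENNReal.ofReal a ^ n := by
  rw [stdCube, (PiLp.volume_preserving_ofLp (Fin n)).measure_preimage
    (MeasurableSet.univ_pi fun _ => measurableSet_Icc).nullMeasurableSet, volume_pi_pi]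
  simp

/-- Unlike `EuclideanSpace.finAddEquivProd`, an isometry: the product carries the L² norm. -/
noncomputable def finAddEquivProdL2 (m k : ℕ) : EuclideanSpace ℝ (Fin (m + k)) ≃ₗᵢ[ℝ]
    WithLp 2 (EuclideanSpace ℝ (Fin m) × EuclideanSpace ℝ (Fin k)) :=
  (LinearIsometryEquiv.piLpCongrLeft 2 ℝ ℝ finSumFinEquiv).symm.trans
    (PiLp.sumPiLpEquivProdLpPiLp 2 fun _ => ℝ)

theorem finAddEquivProdL2_symm_apply (m k : ℕ) (x : EuclideanSpace ℝ (Fin m))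
    (y : EuclideanSpace ℝ (Fin k)) :
    (finAddEquivProdL2 m k).symm (WithLp.toLp 2 (x, y)) =
      WithLp.toLp 2 (Fin.append x.ofLp y.ofLp) := by
  ext i
  refine Fin.addCases (fun i => ?_) (fun i => ?_) i <;> simp [finAddEquivProdL2]

theorem finAddEquivProdL2_apply (m k : ℕ) (x : EuclideanSpace ℝ (Fin (m + k))) :
    finAddEquivProdL2 m k x = WithLp.toLp 2
      (WithLp.toLp 2 fun i => x (Fin.castAdd k i), WithLp.toLp 2 fun i => x (Fin.natAdd m i)) := by
  apply (finAddEquivProdL2 m k).symm.injective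
  rw [LinearIsometryEquiv.symm_apply_apply, finAddEquivProdL2_symm_apply]
  ext i
  refine Fin.addCases (fun i => ?_) (fun i => ?_) i <;> simp

theorem finAddEquivProdL2_preimage_stdCube (m k : ℕ) (a : ℝ) :
    finAddEquivProdL2 m k ⁻¹' (WithLp.ofLp ⁻¹' stdCube m a ×ˢ stdCube k a) =
      stdCube (m + k) a := by
  ext x
  simp only [stdCube, finAddEquivProdL2_apply, mem_preimage, mem_prod, mem_univ_pi,
    Fin.forall_fin_add (P := fun i => x i ∈ Icc 0 a)]

noncomputable def finAddSlice (m k : ℕ) (t : EuclideanSpace ℝ (Fin m)) :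
    EuclideanSpace ℝ (Fin k) →ᵃⁱ[ℝ] EuclideanSpace ℝ (Fin (m + k)) :=
  (finAddEquivProdL2 m k).symm.toLinearIsometry.toAffineIsometry.comp
    ((AffineIsometryEquiv.constVAdd ℝ _ (WithLp.toLp 2 (t, 0))).toAffineIsometry.comp
      (LinearIsometry.withLpInr _).toAffineIsometry)

theorem finAddSlice_apply (m k : ℕ) (t : EuclideanSpace ℝ (Fin m))
    (u : EuclideanSpace ℝ (Fin k)) :
    finAddSlice m k t u = (finAddEquivProdL2 m k).symm (WithLp.toLp 2 (t, u)) := by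
  simp [finAddSlice, ← WithLp.toLp_add]

theorem volume_stdCube_mul_le_volume_inter {m k : ℕ} {a : ℝ} {b : ℝ≥0∞}
    {F : Set (EuclideanSpace ℝ (Fin (m + k)))}
    (hF : ∀ t ∈ stdCube m a, b ≤ volume (stdCube k a ∩ finAddSlice m k t ⁻¹' F)) :
    volume (stdCube m a) * b ≤ volume (stdCube (m + k) a ∩ F) := by
  set e := finAddEquivProdL2 m k
  set X := WithLp.ofLp ⁻¹' stdCube m a ×ˢ stdCube k a ∩ e.symm ⁻¹' F
  have hX : stdCube (m + k) a ∩ F = e ⁻¹' X := by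
    rw [preimage_inter, finAddEquivProdL2_preimage_stdCube, ← preimage_comp]
    simp
  rw [hX, e.measurePreserving.measure_preimage_emb e.toHomeomorph.measurableEmbedding,
    ← (WithLp.volume_preserving_toLp _ _).measure_preimage_emb
      (MeasurableEquiv.toLp 2 _).measurableEmbedding, Measure.volume_eq_prod]
  refine Measure.measure_mul_le_prod_of_le_slice fun t ht => (hF t ht).trans (measure_mono ?_)
  rintro u ⟨hu, huF⟩
  exact ⟨⟨ht, hu⟩, by rwa [mem_preimage, finAddSlice_apply] at huF⟩

end EuclideanSpace

open EuclideanSpace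

noncomputable def hausdorffScale (n : ℕ) : ℝ≥0 :=
  Measure.addHaarScalarFactor (volume : Measure (EuclideanSpace ℝ (Fin n))) μH[n]

theorem hausdorffScale_pos (n : ℕ) : 0 < hausdorffScale n :=
  pos_iff_ne_zero.2 (Measure.addHaarScalarFactor_volume_hausdorffMeasure_ne_zero n)

theorem volume_eq_hausdorffScale_mul (n : ℕ) (s : Set (EuclideanSpace ℝ (Fin n))) :
    volume s = hausdorffScale n * μH[n] s := by
  rw [← EuclideanSpace.euclideanHausdorffMeasure_eq_volume, Measure.euclideanHausdorffMeasure_def,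
    Measure.smul_apply, ENNReal.smul_def, smul_eq_mul, hausdorffScale]

theorem satisfiesGCC_iff_volume {d k : ℕ} {ℓ γ : ℝ} {E : Set (EuclideanSpace ℝ (Fin d))} :
    SatisfiesGCC d k ℓ γ E ↔
      ∀ (φ : EuclideanSpace ℝ (Fin k) →ᵃⁱ[ℝ] EuclideanSpace ℝ (Fin d)) (a : ℝ), ℓ ≤ a →
        ENNReal.ofReal (hausdorffScale k * γ * ℓ ^ k) ≤ volume (stdCube k a ∩ φ ⁻¹' E) := by
  have hc := hausdorffScale_pos k
  refine forall₂_congr fun φ a => imp_congr_right fun _ => ?_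
  rw [← image_inter_preimage, φ.isometry.hausdorffMeasure_image (Or.inl (Nat.cast_nonneg k)),
    volume_eq_hausdorffScale_mul, mul_assoc, ENNReal.ofReal_mul NNReal.zero_le_coe,
    ENNReal.ofReal_coe_nnreal,
    ENNReal.mul_le_mul_iff_right (ENNReal.coe_ne_zero.2 hc.ne') ENNReal.coe_ne_top]
  rfl

theorem gcc_mono_dimension_general (d k : ℕ) (ℓ γ : ℝ)
    (hℓ : 0 < ℓ) (hγ : 0 < γ) (E : Set (EuclideanSpace ℝ (Fin d)))
    (hE : SatisfiesGCC d k ℓ γ E) :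
    ∀ j : ℕ, k ≤ j → j ≤ d → ∃ γ' > (0 : ℝ), SatisfiesGCC d j ℓ γ' E := by
  intro j hkj _
  obtain ⟨m, rfl⟩ := Nat.exists_eq_add_of_le' hkj
  have hcm := hausdorffScale_pos (m + k)
  have hck := hausdorffScale_pos k
  set γ' := hausdorffScale k * γ / hausdorffScale (m + k)
  refine ⟨γ', by positivity, ?_⟩
  rw [satisfiesGCC_iff_volume] at hE ⊢
  intro ψ a ha
  set b := ENNReal.ofReal (hausdorffScale k * γ * ℓ ^ k)
  calc ENNReal.ofReal (hausdorffScale (m + k) * γ' * ℓ ^ (m + k))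
      = ENNReal.ofReal ℓ ^ m * b := by
        rw [← ENNReal.ofReal_pow hℓ.le, ← ENNReal.ofReal_mul (by positivity)]
        congr 1
        rw [mul_div_cancel₀ _ (NNReal.coe_ne_zero.2 hcm.ne'), pow_add]
        ring
    _ ≤ volume (stdCube m a) * b := by
        rw [volume_stdCube]
        gcongr
    _ ≤ volume (stdCube (m + k) a ∩ ψ ⁻¹' E) :=
        volume_stdCube_mul_le_volume_inter fun t _ => hE (ψ.comp (finAddSlice m k t)) a ha

theorem gcc_mono_dimension (d k : ℕ) (hk : 1 ≤ k) (hkd : k ≤ d) (ℓ γ : ℝ)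
    (hℓ : 0 < ℓ) (hγ : 0 < γ) (E : Set (EuclideanSpace ℝ (Fin d)))
    (hE : SatisfiesGCC d k ℓ γ E) :
    ∀ j : ℕ, k ≤ j → j ≤ d → ∃ γ' > (0 : ℝ), SatisfiesGCC d j ℓ γ' E :=
  gcc_mono_dimension_general d k ℓ γ hℓ hγ E hE
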